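/- The Fusion Algorithm is correct: for a finite set S of valuations and X ⊆ Vars with dom(S) \ X = {x₁,...,xₙ}, we have (⊗S) ↓ X = ⊗ Fus_{xₙ}(...(Fus_{x₁}(S))), where Fus_x(S) = {(⊗S₊)^{-x}} ∪ S₋ with S₊ = {s ∈ S | x ∈ dom(s)} and S₋ = S \ S₊. -/
import Mathlib


/-- A relational structure over variables of type `ι`: a domain of variables and a
set of (total representatives of) assignments, cylindrical over the domain. -/
structure RelStr (ι : Type*) where
  dom : Set ι
  A : Set (ι → Bool)
  cyl : ∀ u v : ι → Bool, (∀ x ∈ dom, u x = v x) → u ∈ A → v ∈ A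

namespace RelStr
variable {ι : Type*}

/-- Combination (join) of relational structures. -/
def comb (s t : RelStr ι) : RelStr ι where
  dom := s.dom ∪ t.dom
  A := s.A ∩ t.A
  cyl := fun u v h hu =>
    ⟨s.cyl u v (fun x hx => h x (Or.inl hx)) hu.1,
     t.cyl u v (fun x hx => h x (Or.inr hx)) hu.2⟩

/-- Marginalization (projection) of a relational structure onto a set of variables. -/
def marg (s : RelStr ι) (X : Set ι) : RelStr ι where
  dom := s.dom ∩ X
  A := {u | ∃ a ∈ s.A, ∀ x ∈ s.dom ∩ X, u x = a x}
  cyl := fun u v h hu => by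
    obtain ⟨a, ha, hag⟩ := hu
    exact ⟨a, ha, fun x hx => (h x hx).symm.trans (hag x hx)⟩

/-- The full relational structure `e_X` on variables `X`. -/
def full (X : Set ι) : RelStr ι where
  dom := X
  A := Set.univ
  cyl := fun _ _ _ _ => trivial

/-- Variable elimination. -/
def elim (s : RelStr ι) (x : ι) : RelStr ι := s.marg (s.dom \ {x})

/-- Combination of a finite family (list) of relational structures. -/
def bigComb (l : List (RelStr ι)) : RelStr ι := l.foldr comb (full ∅)

end RelStr

namespace RelStr
variable {ι : Type*}

open Classical in
/-- The fusion operation `Fus_x(S)`: combine all valuations whose domain contains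
`x`, eliminate `x` from the result, and keep the remaining valuations. -/
noncomputable def fus (x : ι) (S : List (RelStr ι)) : List (RelStr ι) :=
  elim (bigComb (S.filter (fun s => decide (x ∈ s.dom)))) x ::
    S.filter (fun s => decide (x ∉ s.dom))

lemma ext' {s t : RelStr ι} (h1 : s.dom = t.dom) (h2 : s.A = t.A) : s = t := by
  cases s; cases t; simp_all

@[simp] lemma comb_dom (s t : RelStr ι) : (comb s t).dom = s.dom ∪ t.dom := rfl
@[simp] lemma comb_A (s t : RelStr ι) : (comb s t).A = s.A ∩ t.A := rfl
@[simp] lemma marg_dom (s : RelStr ι) (X : Set ι) : (marg s X).dom = s.dom ∩ X := rfl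

@[simp] lemma elim_dom (s : RelStr ι) (x : ι) : (elim s x).dom = s.dom \ {x} := by
  show s.dom ∩ (s.dom \ {x}) = s.dom \ {x}
  exact Set.inter_eq_right.mpr Set.diff_subset

lemma comb_assoc (a b c : RelStr ι) : comb (comb a b) c = comb a (comb b c) :=
  ext' (Set.union_assoc _ _ _) (Set.inter_assoc _ _ _)

lemma comb_left_comm (a b c : RelStr ι) : comb a (comb b c) = comb b (comb a c) :=
  ext' (Set.union_left_comm _ _ _) (Set.inter_left_comm _ _ _)

@[simp] lemma full_comb (t : RelStr ι) : comb (full ∅) t = t :=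
  ext' (Set.empty_union _) (Set.univ_inter _)

@[simp] lemma bigComb_nil : bigComb ([] : List (RelStr ι)) = full ∅ := rfl
@[simp] lemma bigComb_cons (s : RelStr ι) (l : List (RelStr ι)) :
    bigComb (s :: l) = comb s (bigComb l) := rfl

lemma dom_bigComb (l : List (RelStr ι)) : (bigComb l).dom = ⋃ s ∈ l, s.dom := by
  induction l with
  | nil => simp [full]
  | cons s l ih => ext y; simp [ih]

lemma marg_of_subset {s : RelStr ι} {X : Set ι} (h : s.dom ⊆ X) : marg s X = s := by
  refine ext' (Set.inter_eq_left.mpr h) ?_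
  ext u
  constructor
  · rintro ⟨a, ha, hag⟩
    exact s.cyl a u (fun y hy => (hag y ⟨hy, h hy⟩).symm) ha
  · intro hu; exact ⟨u, hu, fun _ _ => rfl⟩

lemma elim_comb {s t : RelStr ι} {x : ι} (h : x ∉ t.dom) :
    elim (comb s t) x = comb (elim s x) t := by
  classical
  refine ext' ?_ ?_
  · show (s.dom ∪ t.dom) ∩ ((s.dom ∪ t.dom) \ {x}) = (s.dom ∩ (s.dom \ {x})) ∪ t.dom
    rw [Set.inter_eq_right.mpr Set.diff_subset, Set.inter_eq_right.mpr Set.diff_subset,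
      Set.union_diff_distrib, Set.diff_singleton_eq_self h]
  · ext u
    show (∃ a ∈ s.A ∩ t.A, ∀ y ∈ (s.dom ∪ t.dom) ∩ ((s.dom ∪ t.dom) \ {x}), u y = a y) ↔
      (∃ a ∈ s.A, ∀ y ∈ s.dom ∩ (s.dom \ {x}), u y = a y) ∧ u ∈ t.A
    constructor
    · rintro ⟨a, ⟨ha1, ha2⟩, hag⟩
      refine ⟨⟨a, ha1, fun y hy => hag y ⟨Or.inl hy.1, Or.inl hy.1, hy.2.2⟩⟩,
        t.cyl a u (fun y hy => (hag y ⟨Or.inr hy, Or.inr hy, fun hx => h (hx ▸ hy)⟩).symm) ha2⟩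
    · rintro ⟨⟨a, ha, hag⟩, hu⟩
      refine ⟨fun y => if y = x then a y else u y, ⟨?_, ?_⟩, ?_⟩
      · apply s.cyl a _ _ ha
        intro y hy
        by_cases hyx : y = x
        · simp [hyx]
        · rw [if_neg hyx]
          exact (hag y ⟨hy, hy, hyx⟩).symm
      · apply t.cyl u _ _ hu
        intro y hy
        have hyx : y ≠ x := fun hh => h (hh ▸ hy)
        simp [hyx]
      · rintro y ⟨-, -, hyx⟩
        rw [Set.mem_singleton_iff] at hyx
        simp only [if_neg hyx]

lemma marg_elim {s : RelStr ι} {x : ι} {X : Set ι} (h : x ∉ X) :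
    marg (elim s x) X = marg s X := by
  refine ext' ?_ ?_
  · show (s.dom ∩ (s.dom \ {x})) ∩ X = s.dom ∩ X
    ext y
    constructor
    · rintro ⟨⟨h1, -⟩, h2⟩; exact ⟨h1, h2⟩
    · rintro ⟨h1, h2⟩; exact ⟨⟨h1, h1, fun hh => h (hh ▸ h2)⟩, h2⟩
  · ext u
    show (∃ a : ι → Bool, (∃ b ∈ s.A, ∀ y ∈ s.dom ∩ (s.dom \ {x}), a y = b y) ∧
        ∀ y ∈ (s.dom ∩ (s.dom \ {x})) ∩ X, u y = a y) ↔
      (∃ b ∈ s.A, ∀ y ∈ s.dom ∩ X, u y = b y)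
    constructor
    · rintro ⟨a, ⟨b, hb, hab⟩, hag⟩
      refine ⟨b, hb, fun y hy => ?_⟩
      have hyx : y ≠ x := fun hh => h (hh ▸ hy.2)
      exact (hag y ⟨⟨hy.1, hy.1, hyx⟩, hy.2⟩).trans (hab y ⟨hy.1, hy.1, hyx⟩)
    · rintro ⟨b, hb, hag⟩
      exact ⟨b, ⟨b, hb, fun _ _ => rfl⟩, fun y hy => hag y ⟨hy.1.1, hy.2⟩⟩

lemma bigComb_split (p : RelStr ι → Bool) (l : List (RelStr ι)) :
    comb (bigComb (l.filter p)) (bigComb (l.filter fun s => !p s)) = bigComb l := by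
  induction l with
  | nil => simp
  | cons s l ih =>
    by_cases hp : p s = true
    · have h1 : List.filter p (s :: l) = s :: List.filter p l := by
        simp [List.filter_cons, hp]
      have h2 : List.filter (fun s => !p s) (s :: l) = List.filter (fun s => !p s) l := by
        simp [List.filter_cons, hp]
      rw [h1, h2, bigComb_cons, bigComb_cons, comb_assoc, ih]
    · have hp' : p s = false := by simpa using hp
      have h1 : List.filter p (s :: l) = List.filter p l := by
        simp [List.filter_cons, hp']
      have h2 : List.filter (fun s => !p s) (s :: l) = s :: List.filter (fun s => !p s) l := by
        simp [List.filter_cons, hp']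
      rw [h1, h2, bigComb_cons, bigComb_cons, comb_left_comm, ih]

open Classical in
lemma bigComb_fus (x : ι) (S : List (RelStr ι)) :
    bigComb (fus x S) = elim (bigComb S) x := by
  classical
  have hfilter : S.filter (fun s => decide (x ∉ s.dom)) =
      S.filter (fun s => ! decide (x ∈ s.dom)) := by
    apply List.filter_congr
    intro s _
    by_cases h : x ∈ s.dom <;> simp [h]
  have hx : x ∉ (bigComb (S.filter (fun s => ! decide (x ∈ s.dom)))).dom := by
    rw [dom_bigComb]
    simp only [Set.mem_iUnion, not_exists]
    intro s hs
    rcases List.mem_filter.mp hs with ⟨-, hps⟩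
    simpa using hps
  rw [fus, hfilter, bigComb_cons, ← elim_comb hx,
    bigComb_split (fun s => decide (x ∈ s.dom)) S]

/-- Correctness of the Fusion Algorithm (Shenoy): if `dom(S) \ X = {x₁, …, xₙ}`,
then `(⊗S) ↓ X = ⊗ Fus_{xₙ}(⋯ Fus_{x₁}(S) ⋯)`. -/
theorem fusion_algorithm (S : List (RelStr ι)) (X : Set ι)
    (xs : List ι) (hnd : xs.Nodup)
    (hxs : {y | y ∈ xs} = (⋃ s ∈ S, s.dom) \ X) :
    marg (bigComb S) X = bigComb (xs.foldl (fun L x => fus x L) S) := by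
  induction xs generalizing S with
  | nil =>
    simp only [List.foldl_nil]
    apply marg_of_subset
    rw [dom_bigComb]
    intro y hy
    by_contra hyX
    have : y ∈ ({y | y ∈ ([] : List ι)} : Set ι) := by rw [hxs]; exact ⟨hy, hyX⟩
    simp at this
  | cons x rest ih =>
    have hmem : x ∈ ({y | y ∈ x :: rest} : Set ι) := by simp
    have hxX : x ∉ X := by rw [hxs] at hmem; exact hmem.2
    have hx_rest : x ∉ rest := (List.nodup_cons.mp hnd).1
    rw [List.foldl_cons,
      ← ih (fus x S) (List.nodup_cons.mp hnd).2 ?_, bigComb_fus, marg_elim hxX]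
    have hdom : (⋃ s ∈ fus x S, s.dom) = (⋃ s ∈ S, s.dom) \ {x} := by
      rw [← dom_bigComb, bigComb_fus, elim_dom, dom_bigComb]
    rw [hdom]
    ext y
    simp only [Set.mem_setOf_eq, Set.mem_diff, Set.mem_singleton_iff]
    constructor
    · intro hy
      have hy' : y ∈ ({y | y ∈ x :: rest} : Set ι) := by simp [hy]
      rw [hxs] at hy'
      exact ⟨⟨hy'.1, fun hh => hx_rest (hh ▸ hy)⟩, hy'.2⟩
    · rintro ⟨⟨hy1, hyx⟩, hy2⟩
      have hy' : y ∈ ({y | y ∈ x :: rest} : Set ι) := by rw [hxs]; exact ⟨hy1, hy2⟩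
      simp only [Set.mem_setOf_eq, List.mem_cons] at hy'
      tauto

end RelStr
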